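/- arXiv:math/0402228 — 6 statements merged into one kernel-verified Lean document; each statement's English description precedes it below -/
import Mathlib

section
/- Let V be a finite-dimensional vector space over a non-archimedean local field F with valuation v, and let h be a non-degenerate ε-hermitian form on V relative to an involution σ_F of F. For a norm α on V (i.e., α : V → ℝ ∪ {∞} with α(x+y) ≥ min(α(x),α(y)), α(λx) = v(λ)+α(x), and α(x)=∞ iff x=0), define the dual norm ᾱ(x) = inf_{y∈V, y≠0} (v(h(x,y)) − α(y)). Then the associated lattice functions satisfy Λ_{ᾱ} = (Λ_α)^♯, where Λ_α(r) = {x ∈ V : α(x) ≥ r} and Λ^♯(r) = {x ∈ V : h(x, Λ((−r)+)) ⊆ 𝔭_F}, with Λ(s+) = ⋃_{t>s} Λ(t). -/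
/-- Proposition 3.3: the lattice function of the dual norm is the dual of the
lattice function, `Λ_ᾱ = (Λ_α)^♯`. -/
theorem lattice_function_of_dual_norm
    (F : Type*) [Field F] (V : Type*) [AddCommGroup V] [Module F V]
    (v : F → EReal)
    (hv0 : ∀ x : F, v x = ⊤ ↔ x = 0)
    (hvmul : ∀ x y : F, v (x * y) = v x + v y)
    (hvadd : ∀ x y : F, min (v x) (v y) ≤ v (x + y))
    (hvdisc : ∀ x : F, x ≠ 0 → ∃ n : ℤ, v x = ((n : ℝ) : EReal))
    (σF : F ≃+* F) (hσinv : ∀ x, σF (σF x) = x)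
    (hvσ : ∀ x, v (σF x) = v x)
    (ε : F) (hε : ε = 1 ∨ ε = -1)
    (h : V → V → F)
    (haddl : ∀ x y z, h (x + y) z = h x z + h y z)
    (haddr : ∀ x y z, h x (y + z) = h x y + h x z)
    (hsesq : ∀ (a b : F) (x y : V), h (a • x) (b • y) = σF a * b * h x y)
    (hherm : ∀ x y, h y x = ε * σF (h x y))
    (hnondeg : ∀ x, (∀ y, h x y = 0) → x = 0)
    (α : V → EReal)
    (hαadd : ∀ x y, min (α x) (α y) ≤ α (x + y))
    (hαsmul : ∀ (a : F) (x : V), α (a • x) = v a + α x)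
    (hαtop : ∀ x, α x = ⊤ ↔ x = 0)
    (αbar : V → EReal)
    (hαbar : ∀ x, αbar x = ⨅ y ∈ {y : V | y ≠ 0}, (v (h x y) - α y))
    (𝔭 : Set F) (h𝔭 : 𝔭 = {a : F | 1 ≤ v a}) :
    ∀ r : ℝ,
      {x : V | (r : EReal) ≤ αbar x} =
        {x : V | ∀ y : V,
          y ∈ ⋃ t ∈ Set.Ioi (-r), {z : V | (t : EReal) ≤ α z} → h x y ∈ 𝔭} := by
  intro r
  have hx0 : ∀ x : V, h x (0 : V) = 0 := by
    intro x
    have hh := haddr x 0 0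
    rw [zero_add] at hh
    exact (left_eq_add.mp hh)
  have hsmulr : ∀ (b : F) (x y : V), h x (b • y) = b * h x y := by
    intro b x y
    have hh := hsesq 1 b x y
    simpa [one_smul, map_one] using hh
  have hv1 : v 1 = 0 := by
    obtain ⟨n, hn⟩ := hvdisc 1 one_ne_zero
    have h2 := hvmul 1 1
    rw [one_mul, hn, ← EReal.coe_add] at h2
    have h3 : (n : ℝ) = n + n := by exact_mod_cast h2
    have h4 : (n : ℝ) = 0 := by linarith
    rw [hn, h4]; norm_num
  ext x
  simp only [Set.mem_setOf_eq, Set.mem_iUnion, Set.mem_Ioi, exists_prop, h𝔭]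
  rw [hαbar]
  constructor
  · rintro hr y ⟨t, ht, hty⟩
    by_cases hy0 : y = 0
    · subst hy0; rw [hx0, (hv0 0).mpr rfl]; exact le_top
    by_cases hz : h x y = 0
    · rw [hz, (hv0 0).mpr rfl]; exact le_top
    obtain ⟨n, hn⟩ := hvdisc _ hz
    have hterm : (r : EReal) ≤ v (h x y) - α y := le_trans hr (iInf₂_le y hy0)
    have hytop : α y ≠ ⊤ := fun hc => hy0 ((hαtop y).mp hc)
    have hybot : α y ≠ ⊥ := by
      intro hc
      rw [hc] at hty
      exact absurd hty (by simp)
    obtain ⟨s, hs⟩ : ∃ s : ℝ, α y = (s : EReal) :=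
      ⟨(α y).toReal, (EReal.coe_toReal hytop hybot).symm⟩
    rw [hn, hs, ← EReal.coe_sub] at hterm
    have hrs : r ≤ (n : ℝ) - s := EReal.coe_le_coe_iff.mp hterm
    have hts : t ≤ s := by rw [hs] at hty; exact_mod_cast hty
    have hpos : (0 : ℝ) < (n : ℝ) := by linarith
    have h1 : (1 : ℤ) ≤ n := by exact_mod_cast hpos
    rw [hn]
    exact_mod_cast (by exact_mod_cast h1 : (1 : ℝ) ≤ (n : ℝ))
  · intro hx
    refine le_iInf₂ fun y hy => ?_
    have hy0 : y ≠ 0 := hy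
    by_cases hz : h x y = 0
    · rw [hz, (hv0 0).mpr rfl]
      rcases eq_or_ne (α y) ⊥ with hyb | hyb
      · rw [hyb, EReal.top_sub_bot]; exact le_top
      · obtain ⟨s, hs⟩ : ∃ s : ℝ, α y = (s : EReal) :=
          ⟨(α y).toReal, (EReal.coe_toReal (fun hc => hy0 ((hαtop y).mp hc)) hyb).symm⟩
        rw [hs, EReal.top_sub_coe]
        exact le_top
    have hytop : α y ≠ ⊤ := fun hc => hy0 ((hαtop y).mp hc)
    obtain ⟨m, hm⟩ := hvdisc _ hz
    rcases eq_or_ne (α y) ⊥ with hyb | hyb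
    · rw [hm, hyb, EReal.coe_sub_bot]
      exact le_top
    obtain ⟨s, hs⟩ : ∃ s : ℝ, α y = (s : EReal) :=
      ⟨(α y).toReal, (EReal.coe_toReal hytop hyb).symm⟩
    rw [hm, hs, ← EReal.coe_sub, EReal.coe_le_coe_iff]
    by_contra hc
    push_neg at hc
    have hms : (m : ℝ) < r + s := by linarith
    set b : F := (h x y)⁻¹ with hb
    have hbne : b ≠ 0 := inv_ne_zero hz
    obtain ⟨nb, hnb⟩ := hvdisc b hbne
    have hsum : (nb : ℝ) + (m : ℝ) = 0 := by
      have h2 := hvmul b (h x y)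
      rw [hb, inv_mul_cancel₀ hz, hv1, hnb, hm, ← EReal.coe_add] at h2
      exact_mod_cast h2.symm
    have hmem : ∃ t, -r < t ∧ (t : EReal) ≤ α (b • y) := by
      refine ⟨(nb : ℝ) + s, by linarith, ?_⟩
      rw [hαsmul, hnb, hs, ← EReal.coe_add]
    have h1 := hx (b • y) hmem
    rw [hsmulr, hvmul, hnb, hm, ← EReal.coe_add] at h1
    rw [hsum] at h1
    exact absurd h1 (by norm_num)
end

section
/- With notation as above, a norm α on V equals its dual ᾱ (i.e., α is a maximinorante (MM) norm for h) if and only if the associated lattice function Λ_α is self-dual, i.e., Λ_α^♯ = Λ_α. -/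
/-- Corollary 3.4: a norm `α` is an MM-norm (i.e. `ᾱ = α`) if and only if its
lattice function `Λ_α` is self-dual (`Λ_α^♯ = Λ_α`). -/
theorem mm_norm_iff_self_dual_lattice_function
    (F : Type*) [Field F] (V : Type*) [AddCommGroup V] [Module F V]
    (v : F → EReal)
    (hv0 : ∀ x : F, v x = ⊤ ↔ x = 0)
    (hvmul : ∀ x y : F, v (x * y) = v x + v y)
    (hvadd : ∀ x y : F, min (v x) (v y) ≤ v (x + y))
    (hvdisc : ∀ x : F, x ≠ 0 → ∃ n : ℤ, v x = ((n : ℝ) : EReal))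
    (σF : F ≃+* F) (hσinv : ∀ x, σF (σF x) = x)
    (hvσ : ∀ x, v (σF x) = v x)
    (ε : F) (hε : ε = 1 ∨ ε = -1)
    (h : V → V → F)
    (haddl : ∀ x y z, h (x + y) z = h x z + h y z)
    (haddr : ∀ x y z, h x (y + z) = h x y + h x z)
    (hsesq : ∀ (a b : F) (x y : V), h (a • x) (b • y) = σF a * b * h x y)
    (hherm : ∀ x y, h y x = ε * σF (h x y))
    (hnondeg : ∀ x, (∀ y, h x y = 0) → x = 0)
    (α : V → EReal)
    (hαadd : ∀ x y, min (α x) (α y) ≤ α (x + y))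
    (hαsmul : ∀ (a : F) (x : V), α (a • x) = v a + α x)
    (hαtop : ∀ x, α x = ⊤ ↔ x = 0)
    (αbar : V → EReal)
    (hαbar : ∀ x, αbar x = ⨅ y ∈ {y : V | y ≠ 0}, (v (h x y) - α y))
    (𝔭 : Set F) (h𝔭 : 𝔭 = {a : F | 1 ≤ v a}) :
    (∀ x, αbar x = α x) ↔
      (∀ r : ℝ,
        {x : V | ∀ y : V,
            y ∈ ⋃ t ∈ Set.Ioi (-r), {z : V | (t : EReal) ≤ α z} → h x y ∈ 𝔭}
          = {x : V | (r : EReal) ≤ α x}) := by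
  -- basic facts
  have hσ1 : σF (1 : F) = 1 := map_one σF
  -- right semilinearity in scalar form
  have hhr : ∀ (a : F) (x y : V), h x (a • y) = a * h x y := by
    intro a x y
    have h1 := hsesq 1 a x y
    rw [one_smul, hσ1, one_mul] at h1
    exact h1
  -- h x 0 = 0
  have hx0 : ∀ x : V, h x (0 : V) = 0 := by
    intro x
    have h1 := hhr 0 x 0
    rw [zero_smul, zero_mul] at h1
    exact h1
  -- v 1 = 0
  have hv1 : v (1 : F) = 0 := by
    obtain ⟨n, hn⟩ := hvdisc 1 one_ne_zero
    have h1 := hvmul 1 1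
    rw [one_mul, hn, ← EReal.coe_add] at h1
    have h2 : (n : ℝ) = n + n := EReal.coe_eq_coe_iff.mp h1
    have h3 : (n : ℝ) = 0 := by linarith
    rw [hn, h3, EReal.coe_zero]
  -- α never takes the value ⊥
  have hαbot : ∀ y : V, α y ≠ ⊥ := by
    intro y hy
    have h1 := hαsmul 0 y
    rw [zero_smul, (hαtop (0 : V)).mpr rfl, (hv0 (0 : F)).mpr rfl, hy,
      EReal.add_bot] at h1
    exact absurd h1 (by simp)
  -- membership in the union ↔ -r < α y
  have hmem : ∀ (r : ℝ) (y : V),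
      (y ∈ ⋃ t ∈ Set.Ioi (-r), {z : V | (t : EReal) ≤ α z}) ↔
        (((-r : ℝ) : EReal) < α y) := by
    intro r y
    simp only [Set.mem_iUnion, Set.mem_Ioi, Set.mem_setOf_eq, exists_prop]
    constructor
    · rintro ⟨t, ht, hty⟩
      exact lt_of_lt_of_le (EReal.coe_lt_coe_iff.mpr ht) hty
    · intro hy
      rcases EReal.exists_between_coe_real hy with ⟨t, ht1, ht2⟩
      exact ⟨t, EReal.coe_lt_coe_iff.mp ht1, le_of_lt ht2⟩
  -- key: the dual-lattice condition at level r is equivalent to r ≤ αbar x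
  have key : ∀ (r : ℝ) (x : V),
      (∀ y : V,
          y ∈ ⋃ t ∈ Set.Ioi (-r), {z : V | (t : EReal) ≤ α z} → h x y ∈ 𝔭) ↔
        (r : EReal) ≤ αbar x := by
    intro r x
    rw [hαbar x]
    constructor
    · intro hx
      rw [le_iInf₂_iff]
      intro y hy
      have hy0 : y ≠ 0 := hy
      have hαyt : α y ≠ ⊤ := fun ht => hy0 ((hαtop y).mp ht)
      have hc : ((α y).toReal : EReal) = α y := EReal.coe_toReal hαyt (hαbot y)
      set c : ℝ := (α y).toReal with hcdef
      by_cases hhxy : h x y = 0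
      · rw [hhxy, (hv0 (0 : F)).mpr rfl, ← hc, EReal.top_sub_coe]
        exact le_top
      · obtain ⟨m, hm⟩ := hvdisc _ hhxy
        by_contra hcon
        push_neg at hcon
        rw [hm, ← hc, ← EReal.coe_sub] at hcon
        have hmc : (m : ℝ) - c < r := EReal.coe_lt_coe_iff.mp hcon
        -- scale y by a := (h x y)⁻¹
        set a : F := (h x y)⁻¹ with hadef
        have ha : a ≠ 0 := inv_ne_zero hhxy
        obtain ⟨k, hk⟩ := hvdisc a ha
        have hmul : v (a * h x y) = v a + v (h x y) := hvmul a (h x y)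
        rw [inv_mul_cancel₀ hhxy, hv1, hk, hm, ← EReal.coe_add] at hmul
        have hkm : (0 : ℝ) = (k : ℝ) + m := by
          have := hmul
          rw [← EReal.coe_zero] at this
          exact EReal.coe_eq_coe_iff.mp this
        -- a • y lies in the union
        have hmem' : (a • y) ∈ ⋃ t ∈ Set.Ioi (-r), {z : V | (t : EReal) ≤ α z} := by
          rw [hmem r (a • y), hαsmul a y, hk, ← hc, ← EReal.coe_add]
          exact EReal.coe_lt_coe_iff.mpr (by linarith)
        have hp := hx (a • y) hmem'
        rw [h𝔭, Set.mem_setOf_eq, hhr a x y, hvmul a (h x y), hk, hm,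
          ← EReal.coe_add, ← EReal.coe_one, EReal.coe_le_coe_iff] at hp
        linarith
    · intro hinf y hy
      rw [hmem r y] at hy
      rw [h𝔭, Set.mem_setOf_eq]
      by_cases hy0 : y = 0
      · rw [hy0, hx0 x, (hv0 (0 : F)).mpr rfl]
        exact le_top
      · have h1 : (r : EReal) ≤ v (h x y) - α y := le_iInf₂_iff.mp hinf y hy0
        by_cases hhxy : h x y = 0
        · rw [hhxy, (hv0 (0 : F)).mpr rfl]
          exact le_top
        · obtain ⟨m, hm⟩ := hvdisc _ hhxy
          have hαyt : α y ≠ ⊤ := fun ht => hy0 ((hαtop y).mp ht)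
          have hc : ((α y).toReal : EReal) = α y := EReal.coe_toReal hαyt (hαbot y)
          set c : ℝ := (α y).toReal with hcdef
          rw [hm, ← hc, ← EReal.coe_sub] at h1
          have h2 : r ≤ (m : ℝ) - c := EReal.coe_le_coe_iff.mp h1
          rw [← hc] at hy
          have h3 : -r < c := EReal.coe_lt_coe_iff.mp hy
          have h4 : (0 : ℝ) < m := by linarith
          have h5 : (1 : ℤ) ≤ m := by exact_mod_cast h4
          rw [hm, ← EReal.coe_one, EReal.coe_le_coe_iff]
          exact_mod_cast h5
  constructor
  · intro heq r
    ext x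
    simp only [Set.mem_setOf_eq]
    rw [key r x, heq x]
  · intro hsets x
    have hiff : ∀ r : ℝ, ((r : EReal) ≤ αbar x ↔ (r : EReal) ≤ α x) := by
      intro r
      have h1 := Set.ext_iff.mp (hsets r) x
      simp only [Set.mem_setOf_eq] at h1
      exact (key r x).symm.trans h1
    refine le_antisymm ?_ ?_
    · by_contra hlt
      push_neg at hlt
      rcases EReal.exists_between_coe_real hlt with ⟨t, ht1, ht2⟩
      exact absurd ((hiff t).mp (le_of_lt ht2)) (not_le.mpr ht1)
    · by_contra hlt
      push_neg at hlt
      rcases EReal.exists_between_coe_real hlt with ⟨t, ht1, ht2⟩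
      exact absurd ((hiff t).mpr (le_of_lt ht2)) (not_le.mpr ht1)
end

section
/- Let Λ, M be 𝔬_F-lattice functions in V split by a common basis (e_1,…,e_n), with Λ(r) = ⊕_k 𝔭_F^{⌈r+λ_k⌉}e_k and M(r) = ⊕_k 𝔭_F^{⌈r+μ_k⌉}e_k. Then for t ∈ [0,1], the function r ↦ ⊕_k 𝔭_F^{⌈r + tλ_k + (1−t)μ_k⌉}e_k is again a lattice function (the barycenter tΛ + (1−t)M), and it is independent of the choice of common splitting basis. -/
/-- The lattice function split by a basis `e` with exponents `c`:
`Λ(r) = ⊕_k 𝔭_F^{⌈r + c k⌉} e_k`. -/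
def splitLat {F V : Type*} [Field F] [AddCommGroup V] [Module F V]
    (v : F → EReal) {n : ℕ} (e : Fin n → V) (c : Fin n → ℝ) : ℝ → Set V :=
  fun r => {x : V | ∃ a : Fin n → F,
    (∀ k, ((⌈r + c k⌉ : ℝ) : EReal) ≤ v (a k)) ∧ x = ∑ k, a k • e k}

section Aux
variable {F V : Type*} [Field F] [AddCommGroup V] [Module F V] (v : F → EReal)

lemma le_v_sum {ι : Type*} (hv0 : v 0 = ⊤) (hvadd : ∀ x y : F, min (v x) (v y) ≤ v (x + y))
    (B : EReal) (s : Finset ι) (a : ι → F) (h : ∀ i ∈ s, B ≤ v (a i)) :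
    B ≤ v (∑ i ∈ s, a i) := by
  induction s using Finset.cons_induction with
  | empty => simp [hv0]
  | cons i s hi ih =>
    rw [Finset.sum_cons]
    refine le_trans ?_ (hvadd _ _)
    exact le_min (h i (Finset.mem_cons_self _ _)) (ih fun j hj => h j (Finset.mem_cons_of_mem hj))

lemma mem_splitLat_iff {n : ℕ} (e : Module.Basis (Fin n) F V) (c : Fin n → ℝ) (r : ℝ) (x : V) :
    x ∈ splitLat v ⇑e c r ↔ ∀ k, ((⌈r + c k⌉ : ℝ) : EReal) ≤ v (e.repr x k) := by
  constructor
  · rintro ⟨a, ha, rfl⟩ k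
    rw [e.repr_sum_self]
    exact ha k
  · intro h
    exact ⟨fun k => e.repr x k, h, (e.sum_repr x).symm⟩

/-- Intrinsic description of the barycenter of two lattice functions. -/
def barSet {V : Type*} [AddCommGroup V] (t : ℝ) (L M : ℝ → Set V) (r : ℝ) : Set V :=
  {x | ∃ N : ℕ, ∃ s s' : Fin N → ℝ, ∃ y : Fin N → V,
    (∀ i, r ≤ t * s i + (1 - t) * s' i) ∧ (∀ i, y i ∈ L (s i)) ∧ (∀ i, y i ∈ M (s' i)) ∧
    x = ∑ i, y i}

lemma splitLat_bar_eq (hv0 : ∀ x : F, v x = ⊤ ↔ x = 0)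
    (hvadd : ∀ x y : F, min (v x) (v y) ≤ v (x + y))
    {n : ℕ} (e : Module.Basis (Fin n) F V) (lam mu : Fin n → ℝ)
    (t : ℝ) (ht : t ∈ Set.Icc (0 : ℝ) 1) :
    splitLat v ⇑e (fun k => t * lam k + (1 - t) * mu k)
      = barSet t (splitLat v ⇑e lam) (splitLat v ⇑e mu) := by
  have hvz : v 0 = ⊤ := (hv0 0).2 rfl
  obtain ⟨ht0, ht1⟩ := ht
  funext r
  ext x
  constructor
  · rw [mem_splitLat_iff]
    intro h
    refine ⟨n, fun k => (⌈r + (t * lam k + (1 - t) * mu k)⌉ : ℝ) - lam k,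
      fun k => (⌈r + (t * lam k + (1 - t) * mu k)⌉ : ℝ) - mu k,
      fun k => e.repr x k • e k, fun k => ?_, fun k => ?_, fun k => ?_, (e.sum_repr x).symm⟩
    · show r ≤ t * ((⌈r + (t * lam k + (1 - t) * mu k)⌉ : ℝ) - lam k)
        + (1 - t) * ((⌈r + (t * lam k + (1 - t) * mu k)⌉ : ℝ) - mu k)
      nlinarith [Int.le_ceil (r + (t * lam k + (1 - t) * mu k))]
    · refine ⟨fun j => if j = k then e.repr x k else 0, fun j => ?_, ?_⟩
      · by_cases hj : j = k
        · subst hj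
          simp only [if_pos rfl]
          have : ⌈(⌈r + (t * lam j + (1 - t) * mu j)⌉ : ℝ) - lam j + lam j⌉ = ⌈r + (t * lam j + (1 - t) * mu j)⌉ := by
            rw [sub_add_cancel, Int.ceil_intCast]
          rw [this]
          exact h j
        · simp [hj, hvz]
      · simp [Finset.sum_ite_eq']
    · refine ⟨fun j => if j = k then e.repr x k else 0, fun j => ?_, ?_⟩
      · by_cases hj : j = k
        · subst hj
          simp only [if_pos rfl]
          have : ⌈(⌈r + (t * lam j + (1 - t) * mu j)⌉ : ℝ) - mu j + mu j⌉ = ⌈r + (t * lam j + (1 - t) * mu j)⌉ := by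
            rw [sub_add_cancel, Int.ceil_intCast]
          rw [this]
          exact h j
        · simp [hj, hvz]
      · simp [Finset.sum_ite_eq']
  · rintro ⟨N, s, s', y, hss, hL, hM, rfl⟩
    rw [mem_splitLat_iff]
    intro k
    have hrepr : e.repr (∑ i, y i) k = ∑ i, e.repr (y i) k := by
      rw [map_sum]
      simp [Finsupp.finset_sum_apply]
    rw [hrepr]
    refine le_v_sum v hvz hvadd _ _ _ fun i _ => ?_
    have hL' := (mem_splitLat_iff v e lam (s i) (y i)).1 (hL i) k
    have hM' := (mem_splitLat_iff v e mu (s' i) (y i)).1 (hM i) k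
    rcases le_total (s' i + mu k) (s i + lam k) with hcase | hcase
    · refine le_trans ?_ hL'
      have hle : r + (t * lam k + (1 - t) * mu k) ≤ s i + lam k := by nlinarith [hss i]
      have : ⌈r + (t * lam k + (1 - t) * mu k)⌉ ≤ ⌈s i + lam k⌉ := Int.ceil_le_ceil hle
      exact EReal.coe_le_coe_iff.2 (by exact_mod_cast this)
    · refine le_trans ?_ hM'
      have hle : r + (t * lam k + (1 - t) * mu k) ≤ s' i + mu k := by nlinarith [hss i]
      have : ⌈r + (t * lam k + (1 - t) * mu k)⌉ ≤ ⌈s' i + mu k⌉ := Int.ceil_le_ceil hle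
      exact EReal.coe_le_coe_iff.2 (by exact_mod_cast this)

end Aux

/-- §7: the barycenter `tΛ + (1−t)M` of two lattice functions, computed in a
common splitting basis, is again a lattice function and is independent of the
choice of common splitting basis. -/
theorem barycenter_lattice_function_well_defined
    (F : Type*) [Field F] (V : Type*) [AddCommGroup V] [Module F V]
    (v : F → EReal)
    (hv0 : ∀ x : F, v x = ⊤ ↔ x = 0)
    (hvmul : ∀ x y : F, v (x * y) = v x + v y)
    (hvadd : ∀ x y : F, min (v x) (v y) ≤ v (x + y))
    (hvdisc : ∀ x : F, x ≠ 0 → ∃ m : ℤ, v x = ((m : ℝ) : EReal))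
    (π : F) (hπ : v π = (1 : ℝ))
    (n : ℕ) (e : Module.Basis (Fin n) F V)
    (lam mu : Fin n → ℝ)
    (t : ℝ) (ht : t ∈ Set.Icc (0 : ℝ) 1) :
    -- the barycenter is again a lattice function ...
    ((∀ r s : ℝ, s ≤ r →
        splitLat v (⇑e) (fun k => t * lam k + (1 - t) * mu k) r
          ⊆ splitLat v (⇑e) (fun k => t * lam k + (1 - t) * mu k) s) ∧
      (∀ r : ℝ,
        splitLat v (⇑e) (fun k => t * lam k + (1 - t) * mu k) r
          = ⋂ s ∈ Set.Iio r, splitLat v (⇑e) (fun k => t * lam k + (1 - t) * mu k) s) ∧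
      (∀ r : ℝ,
        splitLat v (⇑e) (fun k => t * lam k + (1 - t) * mu k) (r + 1)
          = (π • ·) '' splitLat v (⇑e) (fun k => t * lam k + (1 - t) * mu k) r)) ∧
    -- ... and is independent of the choice of common splitting basis
    (∀ (f : Module.Basis (Fin n) F V) (lam' mu' : Fin n → ℝ),
      splitLat v (⇑f) lam' = splitLat v (⇑e) lam →
      splitLat v (⇑f) mu' = splitLat v (⇑e) mu →
      splitLat v (⇑f) (fun k => t * lam' k + (1 - t) * mu' k)
        = splitLat v (⇑e) (fun k => t * lam k + (1 - t) * mu k)) := by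
  have hvz : v 0 = ⊤ := (hv0 0).2 rfl
  obtain ⟨c, hc⟩ : ∃ c : Fin n → ℝ, (fun k => t * lam k + (1 - t) * mu k) = c := ⟨_, rfl⟩
  rw [hc]
  -- basic facts about the valuation
  have hπne : π ≠ 0 := by
    intro h
    rw [h, hvz] at hπ
    exact (EReal.coe_lt_top 1).ne hπ.symm
  have hv1 : v 1 = ((0 : ℝ) : EReal) := by
    obtain ⟨m, hm⟩ := hvdisc 1 one_ne_zero
    have h2 := hvmul 1 1
    rw [one_mul, hm, ← EReal.coe_add] at h2
    have : (m : ℝ) = m + m := EReal.coe_eq_coe_iff.1 h2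
    have hm0 : (m : ℝ) = 0 := by linarith
    rw [hm, hm0]
  have hπinv : v π⁻¹ = ((-1 : ℝ) : EReal) := by
    obtain ⟨m, hm⟩ := hvdisc π⁻¹ (inv_ne_zero hπne)
    have h2 := hvmul π π⁻¹
    rw [mul_inv_cancel₀ hπne, hv1, hπ, hm, ← EReal.coe_add] at h2
    have : (0 : ℝ) = 1 + m := EReal.coe_eq_coe_iff.1 h2
    have hm1 : (m : ℝ) = -1 := by linarith
    rw [hm, hm1]
  refine ⟨⟨?_, ?_, ?_⟩, ?_⟩
  · -- monotone
    intro r s hsr x hx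
    rw [mem_splitLat_iff] at hx ⊢
    intro k
    refine le_trans ?_ (hx k)
    have : ⌈s + c k⌉ ≤ ⌈r + c k⌉ := Int.ceil_le_ceil (by linarith)
    exact EReal.coe_le_coe_iff.2 (by exact_mod_cast this)
  · -- left continuity
    intro r
    apply le_antisymm
    · intro x hx
      refine Set.mem_iInter₂.2 fun s hs => ?_
      rw [mem_splitLat_iff] at hx ⊢
      intro k
      refine le_trans ?_ (hx k)
      have : ⌈s + c k⌉ ≤ ⌈r + c k⌉ := Int.ceil_le_ceil (by
        have := le_of_lt (Set.mem_Iio.1 hs); linarith)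
      exact EReal.coe_le_coe_iff.2 (by exact_mod_cast this)
    · intro x hx
      rw [mem_splitLat_iff]
      intro k
      have hδ : (⌈r + c k⌉ : ℝ) - 1 < r + c k := by
        have := Int.ceil_lt_add_one (r + c k); linarith
      obtain ⟨s, hslt, h1⟩ : ∃ s, s < r ∧ (⌈r + c k⌉ : ℝ) - 1 < s + c k :=
        ⟨r - ((r + c k) - ((⌈r + c k⌉ : ℝ) - 1)) / 2, by linarith, by linarith⟩
      have hmem := Set.mem_iInter₂.1 hx s (Set.mem_Iio.2 hslt)
      rw [mem_splitLat_iff] at hmem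
      refine le_trans ?_ (hmem k)
      have hceil : ⌈r + c k⌉ ≤ ⌈s + c k⌉ := by
        have := Int.lt_ceil.2 (by exact_mod_cast h1 : ((⌈r + c k⌉ - 1 : ℤ) : ℝ) < s + c k)
        omega
      exact EReal.coe_le_coe_iff.2 (by exact_mod_cast hceil)
  · -- periodicity
    intro r
    apply le_antisymm
    · intro x hx
      rw [mem_splitLat_iff] at hx
      refine ⟨π⁻¹ • x, ?_, smul_inv_smul₀ hπne x⟩
      rw [mem_splitLat_iff]
      intro k
      have hrepr : e.repr (π⁻¹ • x) k = π⁻¹ * e.repr x k := by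
        rw [map_smul]; rfl
      rw [hrepr, hvmul, hπinv]
      have hx' := hx k
      have hceil : ⌈r + 1 + c k⌉ = ⌈r + c k⌉ + 1 := by
        rw [show r + 1 + c k = (r + c k) + 1 by ring, Int.ceil_add_one]
      rw [hceil] at hx'
      calc ((⌈r + c k⌉ : ℝ) : EReal)
          = ((-1 : ℝ) : EReal) + ((((⌈r + c k⌉ : ℤ) + 1 : ℤ) : ℝ) : EReal) := by
            rw [← EReal.coe_add]; norm_num
        _ ≤ ((-1 : ℝ) : EReal) + v (e.repr x k) := by
            refine add_le_add_right ?_ _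
            exact_mod_cast hx'
    · rintro x ⟨y, hy, rfl⟩
      rw [mem_splitLat_iff] at hy ⊢
      intro k
      have hrepr : e.repr (π • y) k = π * e.repr y k := by
        rw [map_smul]; rfl
      rw [hrepr, hvmul, hπ]
      have hceil : ⌈r + 1 + c k⌉ = ⌈r + c k⌉ + 1 := by
        rw [show r + 1 + c k = (r + c k) + 1 by ring, Int.ceil_add_one]
      calc ((⌈r + 1 + c k⌉ : ℝ) : EReal)
          = ((1 : ℝ) : EReal) + ((⌈r + c k⌉ : ℝ) : EReal) := by
            rw [hceil, ← EReal.coe_add]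
            norm_cast
            omega
        _ ≤ ((1 : ℝ) : EReal) + v (e.repr y k) := add_le_add_right (hy k) _
  · -- well-definedness
    intro f lam' mu' h1 h2
    rw [splitLat_bar_eq v hv0 hvadd f lam' mu' t ht, h1, h2,
      ← splitLat_bar_eq v hv0 hvadd e lam mu t ht, hc]
end

section
/- Let Λ be an 𝔬_F-lattice function in V and define 𝔤̃_{Λ,r} = {a ∈ End_F(V) : aΛ(s) ⊆ Λ(s+r) for all s}. With respect to the trace pairing duality S^* = {a ∈ End_F(V) : Tr(aS) ⊆ 𝔭_F}, one has (𝔤̃_{Λ,r})^* = 𝔤̃_{Λ,(−r)+}, where 𝔤̃_{Λ,s+} = ⋃_{t>s} 𝔤̃_{Λ,t}. Moreover, for any g ∈ GL_F(V), (g S g^{-1})^* = g S^* g^{-1} for any subset S of End_F(V). -/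
set_option linter.unusedSectionVars false
set_option maxHeartbeats 1600000

section BLhelpers

variable {F : Type*} [Field F] {V : Type*} [AddCommGroup V] [Module F V]
variable (v : F → EReal)
variable (hv0 : ∀ x : F, v x = ⊤ ↔ x = 0)
variable (hvmul : ∀ x y : F, v (x * y) = v x + v y)
variable (hvadd : ∀ x y : F, min (v x) (v y) ≤ v (x + y))
variable (hvdisc : ∀ x : F, x ≠ 0 → ∃ m : ℤ, v x = ((m : ℝ) : EReal))
variable (hvval : ∀ m : ℤ, ∃ x : F, v x = ((m : ℝ) : EReal))
variable {n : ℕ} (e : Module.Basis (Fin n) F V) (c : Fin n → ℝ)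

include hv0 hvadd in
lemma BL.v_sum {ι : Type*} (s : Finset ι) (f : ι → F) (m : EReal)
    (h : ∀ i ∈ s, m ≤ v (f i)) : m ≤ v (∑ i ∈ s, f i) := by
  classical
  induction s using Finset.cons_induction with
  | empty => simp [(hv0 0).mpr rfl]
  | cons i s hi ih =>
    rw [Finset.sum_cons]
    refine le_trans ?_ (hvadd _ _)
    exact le_min (h i (Finset.mem_cons_self _ _)) (ih fun j hj => h j (Finset.mem_cons_of_mem hj))

include hv0 hvmul hvdisc in
lemma BL.v_one : v 1 = 0 := by
  obtain ⟨m, hm⟩ := hvdisc 1 one_ne_zero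
  have h := hvmul 1 1
  rw [mul_one, hm, ← EReal.coe_add] at h
  have h2 : (m : ℝ) = m + m := by exact_mod_cast h
  have h3 : (m : ℝ) = 0 := by linarith
  rw [hm, h3]; rfl

lemma BL.mem_splitLat (s : ℝ) (x : V) :
    x ∈ splitLat v (⇑e) c s ↔ ∀ k, ((⌈s + c k⌉ : ℝ) : EReal) ≤ v (e.repr x k) := by
  constructor
  · rintro ⟨a, ha, rfl⟩ k
    rw [e.repr_sum_self]
    exact ha k
  · intro h
    exact ⟨fun k => e.repr x k, h, (e.sum_repr x).symm⟩

include hv0 hvmul hvadd hvdisc in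
lemma BL.endo_char (b : Module.End F V) (t : ℝ) :
    (∀ s : ℝ, ∀ x ∈ splitLat v (⇑e) c s, b x ∈ splitLat v (⇑e) c (s + t)) ↔
    ∀ j k, ((⌈t + c j - c k⌉ : ℝ) : EReal) ≤ v (e.repr (b (e k)) j) := by
  have hvone : v 1 = 0 := BL.v_one v hv0 hvmul hvdisc
  constructor
  · intro h j k
    have hk : e k ∈ splitLat v (⇑e) c (-(c k)) := by
      rw [BL.mem_splitLat]
      intro k'
      rw [e.repr_self]
      by_cases hkk : k' = k
      · subst hkk
        simp only [Finsupp.single_eq_same]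
        rw [hvone]
        have : (⌈-(c k') + c k'⌉ : ℝ) = 0 := by simp
        rw [this]; rfl
      · rw [Finsupp.single_eq_of_ne hkk]
        rw [(hv0 0).mpr rfl]
        exact le_top
    have h1 := h (-(c k)) (e k) hk
    rw [BL.mem_splitLat] at h1
    have h2 := h1 j
    have harg : -(c k) + t + c j = t + c j - c k := by ring
    rwa [harg] at h2
  · intro h s x hx
    rw [BL.mem_splitLat] at hx ⊢
    intro j
    have hbx : b x = ∑ k, e.repr x k • b (e k) := by
      conv_lhs => rw [← e.sum_repr x]
      rw [map_sum]
      simp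
    have hrep : e.repr (b x) j = ∑ k, e.repr x k * e.repr (b (e k)) j := by
      rw [hbx, map_sum]
      simp [Finsupp.smul_apply, smul_eq_mul]
    rw [hrep]
    refine BL.v_sum v hv0 hvadd _ _ _ (fun k _ => ?_)
    rw [hvmul]
    calc ((⌈s + t + c j⌉ : ℝ) : EReal)
        ≤ (((⌈s + c k⌉ : ℝ) + (⌈t + c j - c k⌉ : ℝ) : ℝ) : EReal) := by
          rw [EReal.coe_le_coe_iff]
          have hle := Int.ceil_add_le (s + c k) (t + c j - c k)
          have harg : (s + c k) + (t + c j - c k) = s + t + c j := by ring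
          rw [harg] at hle
          exact_mod_cast hle
      _ = ((⌈s + c k⌉ : ℝ) : EReal) + ((⌈t + c j - c k⌉ : ℝ) : EReal) := EReal.coe_add _ _
      _ ≤ v (e.repr x k) + v (e.repr (b (e k)) j) := add_le_add (hx k) (h j k)

lemma BL.trace_expand [FiniteDimensional F V] (a b : Module.End F V) :
    LinearMap.trace F V (a * b) =
      ∑ l, ∑ k, (e.repr (a (e k)) l) * (e.repr (b (e l)) k) := by
  rw [LinearMap.trace_eq_matrix_trace F e, LinearMap.toMatrix_mul]
  simp [Matrix.trace, Matrix.mul_apply, Matrix.diag, LinearMap.toMatrix_apply]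

end BLhelpers

section Rk1

variable {F : Type*} [Field F] {V : Type*} [AddCommGroup V] [Module F V]
variable {n : ℕ} (e : Module.Basis (Fin n) F V)

/-- the rank one endomorphism `x ↦ (e.repr x j) • (y • e k)` -/
noncomputable def BL.rk1 (j k : Fin n) (y : F) : Module.End F V :=
  (e.coord j).smulRight (y • e k)

lemma BL.rk1_apply_basis (j k : Fin n) (y : F) (m : Fin n) :
    (BL.rk1 e j k y) (e m) = if m = j then y • e k else 0 := by
  simp only [BL.rk1, LinearMap.smulRight_apply, Module.Basis.coord_apply, e.repr_self,
    Finsupp.single_apply]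
  by_cases h : m = j <;> simp [h]

lemma BL.trace_rk1 [FiniteDimensional F V] (a : Module.End F V) (j k : Fin n) (y : F) :
    LinearMap.trace F V (a * BL.rk1 e j k y) = y * e.repr (a (e k)) j := by
  rw [BL.trace_expand e]
  have hb : ∀ l m : Fin n, (e.repr ((BL.rk1 e j k y) (e l)) m)
      = (if l = j then y * (e.repr (e k) m) else 0) := by
    intro l m
    rw [BL.rk1_apply_basis]
    by_cases h : l = j <;>
      simp [h, Finsupp.single_apply, Finsupp.smul_apply, smul_eq_mul]
  simp only [hb]
  rw [Finset.sum_comm]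
  simp [Finset.sum_ite_eq', e.repr_self, Finsupp.single_apply, mul_comm]

end Rk1

section Main

variable {F : Type*} [Field F] {V : Type*} [AddCommGroup V] [Module F V]
variable (v : F → EReal)
variable (hv0 : ∀ x : F, v x = ⊤ ↔ x = 0)
variable (hvmul : ∀ x y : F, v (x * y) = v x + v y)
variable (hvadd : ∀ x y : F, min (v x) (v y) ≤ v (x + y))
variable (hvdisc : ∀ x : F, x ≠ 0 → ∃ m : ℤ, v x = ((m : ℝ) : EReal))
variable (hvval : ∀ m : ℤ, ∃ x : F, v x = ((m : ℝ) : EReal))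
variable {n : ℕ} (e : Module.Basis (Fin n) F V) (c : Fin n → ℝ)

include hv0 hvmul hvadd hvdisc in
lemma BL.rk1_mem (r : ℝ) (j k : Fin n) (y : F)
    (hy : ((⌈r + c k - c j⌉ : ℝ) : EReal) ≤ v y) :
    ∀ s : ℝ, ∀ x ∈ splitLat v (⇑e) c s, (BL.rk1 e j k y) x ∈ splitLat v (⇑e) c (s + r) := by
  rw [BL.endo_char v hv0 hvmul hvadd hvdisc e c]
  intro l m
  rw [BL.rk1_apply_basis]
  by_cases hm : m = j
  · subst hm
    rw [if_pos rfl, map_smul]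
    simp only [Finsupp.smul_apply, e.repr_self, Finsupp.single_apply, smul_eq_mul]
    by_cases hl : k = l
    · subst hl
      simpa using hy
    · rw [if_neg hl, mul_zero, (hv0 0).mpr rfl]
      exact le_top
  · rw [if_neg hm]
    simp only [map_zero, Finsupp.coe_zero, Pi.zero_apply]
    rw [(hv0 0).mpr rfl]
    exact le_top

include hv0 hvmul hvadd hvdisc hvval in
lemma BL.dual_entry [FiniteDimensional F V] (𝔭 : Set F) (h𝔭 : 𝔭 = {a : F | 1 ≤ v a})
    (r : ℝ) (a : Module.End F V)
    (ha : ∀ b : Module.End F V,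
      (∀ s : ℝ, ∀ x ∈ splitLat v (⇑e) c s, b x ∈ splitLat v (⇑e) c (s + r)) →
      LinearMap.trace F V (a * b) ∈ 𝔭) :
    ∀ j k, ((((1 : ℤ) - ⌈r + c k - c j⌉ : ℤ) : ℝ) : EReal) ≤ v (e.repr (a (e k)) j) := by
  intro j k
  obtain ⟨y, hy⟩ := hvval ⌈r + c k - c j⌉
  have hmem := ha (BL.rk1 e j k y)
    (BL.rk1_mem v hv0 hvmul hvadd hvdisc e c r j k y (le_of_eq hy.symm))
  rw [BL.trace_rk1, h𝔭, Set.mem_setOf_eq, hvmul, hy] at hmem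
  set A := e.repr (a (e k)) j with hA
  by_cases hA0 : A = 0
  · rw [hA0, (hv0 0).mpr rfl]; exact le_top
  · obtain ⟨q, hq⟩ := hvdisc A hA0
    rw [hq, ← EReal.coe_add] at hmem
    rw [hq]
    rw [EReal.coe_le_coe_iff]
    have h1 : (1 : EReal) = ((1 : ℝ) : EReal) := rfl
    rw [h1, EReal.coe_le_coe_iff] at hmem
    push_cast
    linarith

end Main

/-- [BL](6.3): trace duality for the filtration of `End_F(V)` attached to a
lattice function: `(𝔤̃_{Λ,r})^* = 𝔤̃_{Λ,(−r)+}`; moreover the trace dual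
commutes with conjugation by any `g ∈ GL_F(V)`. -/
theorem trace_duality_of_lattice_filtration
    (F : Type*) [Field F] (V : Type*) [AddCommGroup V] [Module F V]
    [FiniteDimensional F V]
    (v : F → EReal)
    (hv0 : ∀ x : F, v x = ⊤ ↔ x = 0)
    (hvmul : ∀ x y : F, v (x * y) = v x + v y)
    (hvadd : ∀ x y : F, min (v x) (v y) ≤ v (x + y))
    (hvdisc : ∀ x : F, x ≠ 0 → ∃ m : ℤ, v x = ((m : ℝ) : EReal))
    (hvval : ∀ m : ℤ, ∃ x : F, v x = ((m : ℝ) : EReal))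
    (𝔭 : Set F) (h𝔭 : 𝔭 = {a : F | 1 ≤ v a})
    -- `Λ` a lattice function, split by a basis with exponents `c`
    (n : ℕ) (e : Module.Basis (Fin n) F V) (c : Fin n → ℝ)
    (Λ : ℝ → Set V) (hΛ : Λ = splitLat v (⇑e) c) :
    -- `(𝔤̃_{Λ,r})^* = 𝔤̃_{Λ,(−r)+}` ...
    (∀ r : ℝ,
      {a : Module.End F V | ∀ b : Module.End F V,
          (∀ s : ℝ, ∀ x ∈ Λ s, b x ∈ Λ (s + r)) → LinearMap.trace F V (a * b) ∈ 𝔭}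
        = ⋃ t ∈ Set.Ioi (-r),
            {a : Module.End F V | ∀ s : ℝ, ∀ x ∈ Λ s, a x ∈ Λ (s + t)}) ∧
    -- ... and `(g S g⁻¹)^* = g S^* g⁻¹` for any `g ∈ GL_F(V)` and `S ⊆ End_F(V)`
    (∀ (g : V ≃ₗ[F] V) (S : Set (Module.End F V)),
      {a : Module.End F V | ∀ b ∈
          (fun u : Module.End F V =>
            (g.toLinearMap) * u * (g.symm.toLinearMap)) '' S,
        LinearMap.trace F V (a * b) ∈ 𝔭}
      = (fun u : Module.End F V =>
          (g.toLinearMap) * u * (g.symm.toLinearMap)) ''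
        {a : Module.End F V | ∀ b ∈ S, LinearMap.trace F V (a * b) ∈ 𝔭}) := by
  subst hΛ
  constructor
  · -- part 1
    intro r
    ext a
    simp only [Set.mem_setOf_eq, Set.mem_iUnion, Set.mem_Ioi, exists_prop]
    constructor
    · intro ha
      have hent := BL.dual_entry v hv0 hvmul hvadd hvdisc hvval e c 𝔭 h𝔭 r a ha
      -- choose t
      classical
      set T : Finset ℝ := insert (-r + 1)
        ((Finset.univ : Finset (Fin n × Fin n)).image
          fun p => (((1 : ℤ) - ⌈r + c p.2 - c p.1⌉ : ℤ) : ℝ) + c p.2 - c p.1) with hT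
      have hTne : T.Nonempty := ⟨-r + 1, Finset.mem_insert_self _ _⟩
      set t : ℝ := T.min' hTne with ht
      have htmem := T.min'_mem hTne
      have htgt : -r < t := by
        have : ∀ x ∈ T, -r < x := by
          intro x hx
          rw [hT, Finset.mem_insert] at hx
          rcases hx with hx | hx
          · rw [hx]; linarith
          · simp only [Finset.mem_image, Finset.mem_univ, true_and] at hx
            obtain ⟨p, hp⟩ := hx
            rw [← hp]
            have := Int.ceil_lt_add_one (r + c p.2 - c p.1)
            push_cast
            linarith
        exact this t htmem
      refine ⟨t, htgt, ?_⟩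
      rw [BL.endo_char v hv0 hvmul hvadd hvdisc e c]
      intro j k
      refine le_trans ?_ (hent j k)
      rw [EReal.coe_le_coe_iff]
      have htle : t ≤ (((1 : ℤ) - ⌈r + c k - c j⌉ : ℤ) : ℝ) + c k - c j := by
        apply Finset.min'_le
        rw [hT, Finset.mem_insert]
        right
        exact Finset.mem_image.mpr ⟨(j, k), Finset.mem_univ _, rfl⟩
      have hceil : ⌈t + c j - c k⌉ ≤ (1 : ℤ) - ⌈r + c k - c j⌉ := by
        rw [Int.ceil_le]
        push_cast
        push_cast at htle
        linarith
      exact_mod_cast hceil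
    · rintro ⟨t, htgt, hat⟩ b hb
      rw [BL.endo_char v hv0 hvmul hvadd hvdisc e c] at hat hb
      rw [h𝔭, Set.mem_setOf_eq, BL.trace_expand e]
      refine BL.v_sum v hv0 hvadd _ _ _ (fun l _ => ?_)
      refine BL.v_sum v hv0 hvadd _ _ _ (fun k _ => ?_)
      rw [hvmul]
      have h1 := hat l k
      have h2 := hb k l
      have hceil : (1 : ℤ) ≤ ⌈t + r⌉ := Int.ceil_pos.mpr (by linarith)
      have hceil2 : ⌈t + r⌉ ≤ ⌈t + c l - c k⌉ + ⌈r + c k - c l⌉ := by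
        have := Int.ceil_add_le (t + c l - c k) (r + c k - c l)
        have harg : (t + c l - c k) + (r + c k - c l) = t + r := by ring
        rwa [harg] at this
      calc (1 : EReal) = ((1 : ℝ) : EReal) := rfl
        _ ≤ (((⌈t + c l - c k⌉ : ℝ) + (⌈t + r⌉ - ⌈t + c l - c k⌉ : ℝ) : ℝ) : EReal) := by
            rw [EReal.coe_le_coe_iff]
            have : ((1 : ℤ) : ℝ) ≤ ((⌈t + r⌉ : ℤ) : ℝ) := by exact_mod_cast hceil
            push_cast at this
            linarith
        _ ≤ (((⌈t + c l - c k⌉ : ℝ) + (⌈r + c k - c l⌉ : ℝ) : ℝ) : EReal) := by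
            rw [EReal.coe_le_coe_iff]
            have : ((⌈t + r⌉ : ℤ) : ℝ) ≤ ((⌈t + c l - c k⌉ + ⌈r + c k - c l⌉ : ℤ) : ℝ) := by
              exact_mod_cast hceil2
            push_cast at this
            linarith
        _ = ((⌈t + c l - c k⌉ : ℝ) : EReal) + ((⌈r + c k - c l⌉ : ℝ) : EReal) :=
            EReal.coe_add _ _
        _ ≤ v (e.repr (a (e k)) l) + v (e.repr (b (e l)) k) := add_le_add h1 h2
  · -- part 2: conjugation
    intro g S
    set gg := g.toLinearMap with hgg
    set gs := g.symm.toLinearMap with hgs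
    have hggs : gg * gs = 1 := by
      apply LinearMap.ext; intro x
      simp [hgg, hgs, Module.End.mul_apply]
    have hgsg : gs * gg = 1 := by
      apply LinearMap.ext; intro x
      simp [hgg, hgs, Module.End.mul_apply]
    have htr : ∀ x : Module.End F V, LinearMap.trace F V (gg * x * gs) = LinearMap.trace F V x := by
      intro x
      rw [LinearMap.trace_mul_comm, ← mul_assoc, hgsg, one_mul]
    ext a
    simp only [Set.mem_setOf_eq, Set.mem_image]
    constructor
    · intro ha
      refine ⟨gs * a * gg, ?_, ?_⟩
      · intro u hu
        have h1 := ha (gg * u * gs) ⟨u, hu, rfl⟩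
        have : LinearMap.trace F V (gs * a * gg * u) = LinearMap.trace F V (a * (gg * u * gs)) := by
          have h2 : gs * a * gg * u = gs * (a * (gg * u * gs) * gg) := by
            have h3 : gs * (a * (gg * u * gs) * gg) = gs * a * gg * u * (gs * gg) := by
              noncomm_ring
            rw [h3, hgsg, mul_one]
          rw [h2, LinearMap.trace_mul_comm, mul_assoc, hggs, mul_one]
        rwa [this]
      · have : gg * (gs * a * gg) * gs = (gg * gs) * a * (gg * gs) := by noncomm_ring
        rw [this, hggs, one_mul, mul_one]
    · rintro ⟨a', ha', rfl⟩ b ⟨u, hu, rfl⟩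
      have : (gg * a' * gs) * (gg * u * gs) = gg * (a' * u) * gs := by
        have h1 : (gg * a' * gs) * (gg * u * gs) = gg * a' * (gs * gg) * u * gs := by noncomm_ring
        rw [h1, hgsg, mul_one]
        noncomm_ring
      rw [this, htr]
      exact ha' u hu
end

section
/- Let E = F[β] be a field, e = e(E/F), π_E a uniformizer of E, and Λ an 𝔬_F-lattice function in V such that π_E ∈ 𝔤̃_{Λ,1/e} and π_E^{-1} ∈ 𝔤̃_{Λ,−1/e} (with 𝔤̃_{Λ,r} as above). Then π_E 𝔤̃_{Λ,r} π_E^{-1} = 𝔤̃_{Λ,r} for all r ∈ ℝ, and consequently Λ is an 𝔬_E-lattice function (i.e., normalized by E^×, so each Λ(r) is an 𝔬_E-lattice). -/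
/-- Lemma 10.4: if `π_E ∈ 𝔤̃_{Λ,1/e}` and `π_E⁻¹ ∈ 𝔤̃_{Λ,−1/e}` (and
`𝔬_E ⊆ 𝔤̃_{Λ,0}`), then `π_E 𝔤̃_{Λ,r} π_E⁻¹ = 𝔤̃_{Λ,r}` for all `r`, and `Λ`
is an `𝔬_E`-lattice function. -/
theorem uniformizer_normalizes_filtration
    (F : Type*) [Field F] (V : Type*) [AddCommGroup V] [Module F V]
    [FiniteDimensional F V]
    (v : F → EReal)
    (hv0 : ∀ x : F, v x = ⊤ ↔ x = 0)
    (hvmul : ∀ x y : F, v (x * y) = v x + v y)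
    (hvadd : ∀ x y : F, min (v x) (v y) ≤ v (x + y))
    (hvdisc : ∀ x : F, x ≠ 0 → ∃ m : ℤ, v x = ((m : ℝ) : EReal))
    (𝔭 : Set F) (h𝔭 : 𝔭 = {a : F | 1 ≤ v a})
    -- `Λ` a lattice function, split by a basis with exponents `c`
    (n : ℕ) (bas : Module.Basis (Fin n) F V) (c : Fin n → ℝ)
    (Λ : ℝ → Set V) (hΛ : Λ = splitLat v (⇑bas) c)
    -- the uniformizer `π_E` of `E` and the ramification index `e`
    (e : ℕ) (he : 0 < e)
    (π : V ≃ₗ[F] V)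
    (hπ : ∀ s : ℝ, ∀ x ∈ Λ s, π x ∈ Λ (s + 1 / (e : ℝ)))
    (hπinv : ∀ s : ℝ, ∀ x ∈ Λ s, π.symm x ∈ Λ (s - 1 / (e : ℝ)))
    -- `𝔬_E ⊆ 𝔤̃_{Λ,0}`
    (O : Set (Module.End F V))
    (hO : ∀ a ∈ O, ∀ s : ℝ, ∀ x ∈ Λ s, a x ∈ Λ s) :
    -- `π_E 𝔤̃_{Λ,r} π_E⁻¹ = 𝔤̃_{Λ,r}` for all `r` ...
    (∀ r : ℝ,
      (fun u : Module.End F V =>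
          (π.toLinearMap) * u * (π.symm.toLinearMap)) ''
        {a : Module.End F V | ∀ s : ℝ, ∀ x ∈ Λ s, a x ∈ Λ (s + r)}
      = {a : Module.End F V | ∀ s : ℝ, ∀ x ∈ Λ s, a x ∈ Λ (s + r)}) ∧
    -- ... and `Λ` is an `𝔬_E`-lattice function: `π_E Λ(r) = Λ(r + 1/e)`
    (∀ r : ℝ, (⇑π) '' Λ r = Λ (r + 1 / (e : ℝ))) := by
  constructor
  · intro r
    ext b
    constructor
    · rintro ⟨a, ha, rfl⟩ s x hx
      have h1 := hπinv s x hx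
      have h2 := ha _ _ h1
      have h3 := hπ _ _ h2
      have : s - 1 / (e : ℝ) + r + 1 / (e : ℝ) = s + r := by ring
      rw [this] at h3
      simpa using h3
    · intro hb
      refine ⟨π.symm.toLinearMap * b * π.toLinearMap, ?_, ?_⟩
      · intro s x hx
        have h1 := hπ s x hx
        have h2 := hb _ _ h1
        have h3 := hπinv _ _ h2
        have : s + 1 / (e : ℝ) + r - 1 / (e : ℝ) = s + r := by ring
        rw [this] at h3
        simpa using h3
      · ext x
        simp [Module.End.mul_apply]
  · intro r
    ext y
    constructor
    · rintro ⟨x, hx, rfl⟩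
      exact hπ r x hx
    · intro hy
      refine ⟨π.symm y, ?_, by simp⟩
      have h := hπinv _ _ hy
      have : r + 1 / (e : ℝ) - 1 / (e : ℝ) = r := by ring
      rwa [this] at h
end

section
/- Let E = F[β] be a field with β ≠ 0, σ(β) = −β, and let Λ_x be a self-dual 𝔬_E-lattice function for the E-valued form h_E, with filtration 𝔥̃_{x,r} = {a ∈ End_E V : aΛ_x(s) ⊆ Λ_x(s+r)} and r_o = sup{r : β ∈ 𝔥̃_{x,r}}. Then β𝔥̃_{x,r} = 𝔥̃_{x,r+r_o} for all r ∈ ℝ, and the symmetric part satisfies 𝔥^+_{x,r} := {a ∈ 𝔥̃_{x,r} : a = a^σ} = β·𝔥_{x,r−r_o}, where 𝔥_{x,s} = {a ∈ 𝔥̃_{x,s} : a + a^σ = 0}. -/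
/-- Key computation in Theorem 11.2: `β 𝔥̃_{x,r} = 𝔥̃_{x,r+r_o}` and the
symmetric part satisfies `𝔥⁺_{x,r} = β·𝔥_{x,r−r_o}`. -/
theorem beta_shift_of_filtration
    (E : Type*) [Field E] (V : Type*) [AddCommGroup V] [Module E V]
    (vE : E → EReal)
    (hvE0 : ∀ x : E, vE x = ⊤ ↔ x = 0)
    (hvEmul : ∀ x y : E, vE (x * y) = vE x + vE y)
    (hvEadd : ∀ x y : E, min (vE x) (vE y) ≤ vE (x + y))
    (σE : E ≃+* E) (hσEinv : ∀ x, σE (σE x) = x)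
    (hvEσ : ∀ x : E, vE (σE x) = vE x)
    -- `β ∈ E^×` with `σ(β) = -β`
    (β : E) (hβne : β ≠ 0) (hσβ : σE β = -β)
    -- the `ε`-hermitian `E`-valued form `h_E` and its adjoint involution `σ`
    (εE : E) (hεE : εE = 1 ∨ εE = -1)
    (hE : V → V → E)
    (haddl : ∀ x y z, hE (x + y) z = hE x z + hE y z)
    (haddr : ∀ x y z, hE x (y + z) = hE x y + hE x z)
    (hsesq : ∀ (a b : E) (x y : V), hE (a • x) (b • y) = σE a * b * hE x y)
    (hherm : ∀ x y, hE y x = εE * σE (hE x y))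
    (hnondeg : ∀ x : V, (∀ y, hE x y = 0) → x = 0)
    (σ : (V →ₗ[E] V) → (V →ₗ[E] V))
    (hadj : ∀ (a : V →ₗ[E] V) (x y : V), hE (a x) y = hE x ((σ a) y))
    (hσinv : ∀ a, σ (σ a) = a)
    (hσadd : ∀ a b, σ (a + b) = σ a + σ b)
    (hσsmul : ∀ (b : E) (a : V →ₗ[E] V), σ (b • a) = σE b • σ a)
    -- `Λ_x` a self-dual `𝔬_E`-lattice function; `β` normalizes it with shift `r_o`
    (Λx : ℝ → Set V)
    (hself : ∀ r : ℝ,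
      Λx r = {x : V | ∀ y : V, y ∈ ⋃ t ∈ Set.Ioi (-r), Λx t → 1 ≤ vE (hE x y)})
    (ro : ℝ)
    (hro : (∀ s : ℝ, ∀ x ∈ Λx s, β • x ∈ Λx (s + ro)) ∧
      ∀ r : ℝ, (∀ s : ℝ, ∀ x ∈ Λx s, β • x ∈ Λx (s + r)) → r ≤ ro)
    (hβnorm : ∀ s : ℝ, (β • ·) '' Λx s = Λx (s + ro)) :
    -- `β 𝔥̃_{x,r} = 𝔥̃_{x,r+r_o}` ...
    (∀ r : ℝ,
      (β • ·) '' {a : V →ₗ[E] V | ∀ s : ℝ, ∀ x ∈ Λx s, a x ∈ Λx (s + r)}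
        = {a : V →ₗ[E] V | ∀ s : ℝ, ∀ x ∈ Λx s, a x ∈ Λx (s + (r + ro))}) ∧
    -- ... and `𝔥⁺_{x,r} = β · 𝔥_{x,r−r_o}`
    (∀ r : ℝ,
      {a : V →ₗ[E] V | (∀ s : ℝ, ∀ x ∈ Λx s, a x ∈ Λx (s + r)) ∧ σ a = a}
        = (β • ·) ''
          {a : V →ₗ[E] V | (∀ s : ℝ, ∀ x ∈ Λx s, a x ∈ Λx (s + (r - ro))) ∧
            σ a = -a}) := by
  have hβro : ∀ s : ℝ, ∀ x : V, x ∈ Λx (s + ro) ↔ β⁻¹ • x ∈ Λx s := by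
    intro s x
    rw [← hβnorm s]
    constructor
    · rintro ⟨y, hy, rfl⟩
      simpa [smul_smul, inv_mul_cancel₀ hβne] using hy
    · intro h
      exact ⟨β⁻¹ • x, h, by simp [smul_smul, mul_inv_cancel₀ hβne]⟩
  have hσβinv : σE β⁻¹ = -β⁻¹ := by
    rw [map_inv₀, hσβ, inv_neg]
  constructor
  · intro r
    ext b
    simp only [Set.mem_image, Set.mem_setOf_eq]
    constructor
    · rintro ⟨a, ha, rfl⟩ s x hx
      rw [show s + (r + ro) = (s + r) + ro by ring, ← hβnorm]
      exact ⟨a x, ha s x hx, rfl⟩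
    · intro hb
      refine ⟨β⁻¹ • b, ?_, ?_⟩
      · intro s x hx
        have := hb s x hx
        rw [show s + (r + ro) = (s + r) + ro by ring] at this
        simpa using (hβro (s + r) (b x)).mp this
      · simp [smul_smul, mul_inv_cancel₀ hβne]
  · intro r
    ext a
    simp only [Set.mem_setOf_eq, Set.mem_image]
    constructor
    · rintro ⟨ha, hsym⟩
      refine ⟨β⁻¹ • a, ⟨?_, ?_⟩, ?_⟩
      · intro s x hx
        have := ha s x hx
        rw [show s + r = (s + (r - ro)) + ro by ring] at this
        simpa using (hβro _ (a x)).mp this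
      · rw [hσsmul, hσβinv, hsym, neg_smul]
      · simp [smul_smul, mul_inv_cancel₀ hβne]
    · rintro ⟨c, ⟨hc, hanti⟩, rfl⟩
      refine ⟨?_, ?_⟩
      · intro s x hx
        rw [show s + r = (s + (r - ro)) + ro by ring, ← hβnorm]
        exact ⟨c x, hc s x hx, rfl⟩
      · rw [hσsmul, hσβ, hanti, neg_smul, smul_neg, neg_neg]
end
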